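/- Suppose p(z_1,...,z_m) is real stable, z is above the roots of p, and δ > 0 satisfies Φ^j_p(z) ≤ 1 - 1/δ. Then for all i, Φ^i_{p - ∂_{z_j} p}(z + δe_j) ≤ Φ^i_p(z). -/

import Mathlib

open MvPolynomial

/-- The barrier function Φ^i_p(z) = ∂_{z_i} p(z) / p(z). -/
noncomputable def barrierFn {m : ℕ} (p : MvPolynomial (Fin m) ℝ) (i : Fin m)
    (z : Fin m → ℝ) : ℝ :=
  eval z (pderiv i p) / eval z p

/-- The partial derivative ∂_{z_j} Φ^i_p(z), written via polynomials. -/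
noncomputable def dBarrierFn {m : ℕ} (p : MvPolynomial (Fin m) ℝ) (i j : Fin m)
    (z : Fin m → ℝ) : ℝ :=
  eval z (pderiv j (pderiv i p)) / eval z p - barrierFn p i z * barrierFn p j z

/-- Shift the j-th coordinate by δ: z + δ e_j. -/
def shiftCoord {m : ℕ} (z : Fin m → ℝ) (j : Fin m) (δ : ℝ) : Fin m → ℝ :=
  fun k => z k + if k = j then δ else 0

/-! Along the line `z + t e_j` one has
`Φ^i_{p - ∂_j p} = Φ^i_p - ∂_j Φ^i_p / (1 - Φ^j_p)`. At `w = z + δ e_j`, monotonicity gives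
`∂_j Φ^i_p(w) ≤ 0` and `1 - Φ^j_p(w) ≥ 1/δ`, so the correction is at most `-δ ∂_j Φ^i_p(w)`,
and convexity bounds `Φ^i_p(w) - δ ∂_j Φ^i_p(w)` by `Φ^i_p(z)`. -/

lemma pderiv_pderiv_comm {σ R : Type*} [CommSemiring R] (i j : σ) (p : MvPolynomial σ R) :
    pderiv i (pderiv j p) = pderiv j (pderiv i p) := by
  classical
  induction p using MvPolynomial.induction_on with
  | C a => simp
  | add p q hp hq => simp [hp, hq]
  | mul_X p n hp =>
    simp only [pderiv_mul, pderiv_X, map_add, hp, Pi.single_apply]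
    split_ifs <;> simp [add_comm]; ring

lemma HasDerivAt.nonpos_of_le_right {f : ℝ → ℝ} {d x : ℝ} (hf : HasDerivAt f d x)
    (hle : ∀ t, x ≤ t → f t ≤ f x) : d ≤ 0 := by
  have hmax : IsLocalMaxOn f (Set.Ici x) x :=
    Filter.eventually_of_mem self_mem_nhdsWithin hle
  simpa using hmax.hasFDerivWithinAt_nonpos hf.hasDerivWithinAt.hasFDerivWithinAt
    (y := 1) (mem_posTangentConeAt_of_segment_subset
      ((segment_eq_Icc (by simp)).trans_subset Set.Icc_subset_Ici_self))

lemma shiftCoord_zero {m : ℕ} (w : Fin m → ℝ) (j : Fin m) : shiftCoord w j 0 = w := by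
  funext k; simp [shiftCoord]

lemma hasDerivAt_eval_shiftCoord {m : ℕ} (q : MvPolynomial (Fin m) ℝ) (w : Fin m → ℝ)
    (j : Fin m) (t : ℝ) :
    HasDerivAt (fun s => eval (shiftCoord w j s) q) (eval (shiftCoord w j t) (pderiv j q)) t := by
  induction q using MvPolynomial.induction_on with
  | C a => simpa using hasDerivAt_const t a
  | add p q hp hq => simpa using hp.fun_add hq
  | mul_X p n hp =>
    have hX : HasDerivAt (fun s => shiftCoord w j s n) (if n = j then 1 else 0) t := by
      unfold shiftCoord
      split_ifs
      · simpa using (hasDerivAt_id t).const_add (w n)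
      · simpa using hasDerivAt_const t (w n)
    rw [show (fun s => eval (shiftCoord w j s) (p * X n))
        = fun s => eval (shiftCoord w j s) p * shiftCoord w j s n by simp]
    refine (hp.fun_mul hX).congr_deriv ?_
    split_ifs <;> simp [pderiv_X, *] <;> ring

lemma hasDerivAt_barrierFn_shiftCoord {m : ℕ} (p : MvPolynomial (Fin m) ℝ) (i j : Fin m)
    (w : Fin m → ℝ) (t : ℝ) (hp : eval (shiftCoord w j t) p ≠ 0) :
    HasDerivAt (fun s => barrierFn p i (shiftCoord w j s))
      (dBarrierFn p i j (shiftCoord w j t)) t := by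
  refine ((hasDerivAt_eval_shiftCoord (pderiv i p) w j t).fun_div
    (hasDerivAt_eval_shiftCoord p w j t) hp).congr_deriv ?_
  simp only [dBarrierFn, barrierFn]
  field_simp

def AboveRoots {m : ℕ} (p : MvPolynomial (Fin m) ℝ) (z : Fin m → ℝ) : Prop :=
  ∀ t : Fin m → ℝ, (∀ k, 0 ≤ t k) → 0 < eval (z + t) p

lemma AboveRoots.eval_pos {m : ℕ} {p : MvPolynomial (Fin m) ℝ} {z : Fin m → ℝ}
    (h : AboveRoots p z) : 0 < eval z p := by
  simpa using h 0 fun _ => le_rfl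

lemma AboveRoots.shiftCoord_of_nonneg {m : ℕ} {p : MvPolynomial (Fin m) ℝ} {z : Fin m → ℝ}
    (h : AboveRoots p z) (j : Fin m) {δ : ℝ} (hδ : 0 ≤ δ) : AboveRoots p (shiftCoord z j δ) := by
  intro t ht
  have hshift : shiftCoord z j δ + t = z + fun k => t k + if k = j then δ else 0 := by
    funext k; simp only [shiftCoord, Pi.add_apply]; ring
  rw [hshift]
  exact h _ fun k => add_nonneg (ht k) (by split_ifs <;> simp [hδ])

lemma dBarrierFn_nonpos_of_antitone {m : ℕ} {p : MvPolynomial (Fin m) ℝ} {w : Fin m → ℝ}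
    (hp : eval w p ≠ 0) (i j : Fin m)
    (hanti : ∀ t, 0 ≤ t → barrierFn p i (shiftCoord w j t) ≤ barrierFn p i w) :
    dBarrierFn p i j w ≤ 0 := by
  have hd := hasDerivAt_barrierFn_shiftCoord p i j w 0 (by rwa [shiftCoord_zero])
  rw [shiftCoord_zero] at hd
  exact hd.nonpos_of_le_right (by simpa only [shiftCoord_zero] using hanti)

lemma barrierFn_sub_pderiv {m : ℕ} (p : MvPolynomial (Fin m) ℝ) (i j : Fin m) (w : Fin m → ℝ)
    (hp : eval w p ≠ 0) (hj : barrierFn p j w ≠ 1) :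
    barrierFn (p - pderiv j p) i w
      = barrierFn p i w - dBarrierFn p i j w / (1 - barrierFn p j w) := by
  have hsub : eval w p - eval w (pderiv j p) ≠ 0 := by
    contrapose! hj
    rw [barrierFn, ← sub_eq_zero.mp hj, div_self hp]
  have hj' : 1 - barrierFn p j w ≠ 0 := sub_ne_zero.mpr hj.symm
  simp only [barrierFn, dBarrierFn, map_sub, pderiv_pderiv_comm i j] at hj' ⊢
  field_simp
  ring

theorem barrier_decreases_general {m : ℕ} (p : MvPolynomial (Fin m) ℝ)
    (z : Fin m → ℝ)
    (habove : ∀ t : Fin m → ℝ, (∀ k, 0 ≤ t k) → 0 < eval (z + t) p)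
    (j : Fin m) (δ : ℝ) (hδ : 0 < δ)
    (hbar : barrierFn p j z ≤ 1 - 1 / δ)
    (hmono : ∀ w : Fin m → ℝ, (∀ t : Fin m → ℝ, (∀ k, 0 ≤ t k) → 0 < eval (w + t) p) →
      ∀ (i j' : Fin m) (δ' : ℝ), 0 ≤ δ' →
        barrierFn p i (shiftCoord w j' δ') ≤ barrierFn p i w)
    (hconv : ∀ w : Fin m → ℝ, (∀ t : Fin m → ℝ, (∀ k, 0 ≤ t k) → 0 < eval (w + t) p) →
      ∀ (i j' : Fin m) (δ' : ℝ), 0 ≤ δ' →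
        barrierFn p i (shiftCoord w j' δ')
          ≤ barrierFn p i w + δ' * dBarrierFn p i j' (shiftCoord w j' δ')) :
    ∀ i : Fin m, barrierFn (p - pderiv j p) i (shiftCoord z j δ) ≤ barrierFn p i z := by
  intro i
  set w := shiftCoord z j δ
  have hw : AboveRoots p w := AboveRoots.shiftCoord_of_nonneg habove j hδ.le
  have hgap : 1 / δ ≤ 1 - barrierFn p j w := by linarith [hmono z habove j j δ hδ.le]
  have hgap_pos : 0 < 1 - barrierFn p j w := lt_of_lt_of_le (by positivity) hgap
  have hD : dBarrierFn p i j w ≤ 0 :=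
    dBarrierFn_nonpos_of_antitone hw.eval_pos.ne' i j (hmono w hw i j)
  rw [barrierFn_sub_pderiv p i j w hw.eval_pos.ne' (by linarith)]
  calc barrierFn p i w - dBarrierFn p i j w / (1 - barrierFn p j w)
      ≤ barrierFn p i w - δ * dBarrierFn p i j w := by
        have := mul_le_mul_of_nonpos_left ((one_div_le hgap_pos hδ).mpr hgap) hD
        rw [div_eq_mul_one_div, mul_comm δ]
        linarith
    _ ≤ barrierFn p i z := by linarith [hconv z habove i j δ hδ.le]

theorem barrier_decreases {m : ℕ} (p : MvPolynomial (Fin m) ℝ)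
    (hstable : ∀ ζ : Fin m → ℂ, (∀ i, 0 < (ζ i).im) → MvPolynomial.aeval ζ p ≠ 0)
    (z : Fin m → ℝ)
    (habove : ∀ t : Fin m → ℝ, (∀ k, 0 ≤ t k) → 0 < eval (z + t) p)
    (j : Fin m) (δ : ℝ) (hδ : 0 < δ)
    (hbar : barrierFn p j z ≤ 1 - 1 / δ)
    (hmono : ∀ w : Fin m → ℝ, (∀ t : Fin m → ℝ, (∀ k, 0 ≤ t k) → 0 < eval (w + t) p) →
      ∀ (i j' : Fin m) (δ' : ℝ), 0 ≤ δ' →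
        barrierFn p i (shiftCoord w j' δ') ≤ barrierFn p i w)
    (hconv : ∀ w : Fin m → ℝ, (∀ t : Fin m → ℝ, (∀ k, 0 ≤ t k) → 0 < eval (w + t) p) →
      ∀ (i j' : Fin m) (δ' : ℝ), 0 ≤ δ' →
        barrierFn p i (shiftCoord w j' δ')
          ≤ barrierFn p i w + δ' * dBarrierFn p i j' (shiftCoord w j' δ')) :
    ∀ i : Fin m, barrierFn (p - pderiv j p) i (shiftCoord z j δ) ≤ barrierFn p i z :=
  barrier_decreases_general p z habove j δ hδ hbar hmono hconv
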